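/- Let P_{i_1},...,P_{i_m} be all occurrences of a fixed phrase P in a rightmost-encoded LZ-like parsing of a string of length n, with distances d_{i_1},...,d_{i_m} to the rightmost previous occurrence of P (as source). Then d_{i_1} + d_{i_2} + ... + d_{i_m} ≤ n, and consequently ∑_{t=1}^m log d_{i_t} ≤ m·log(n/m). -/

import Mathlib

/-- Start position (0-based) of the `j`-th phrase of a parsing. -/
def phraseStart (P : List (List ℕ)) (j : ℕ) : ℕ := ((P.take j).flatten).length

/-- An LZ-like parsing of `T`. -/
def IsLZLike (T : List ℕ) (P : List (List ℕ)) : Prop :=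
  T = P.flatten ∧ (∀ Q ∈ P, Q ≠ []) ∧
  ∀ j, j < P.length →
    (P.getD j []).length = 1 ∨
    ∃ p, p < phraseStart P j ∧ (T.drop p).take (P.getD j []).length = P.getD j []

/-- Phrase `j` has an occurrence in `T` starting strictly before its own start. -/
def hasEarlier (T : List ℕ) (P : List (List ℕ)) (j : ℕ) : Prop :=
  ∃ p, p < phraseStart P j ∧ (T.drop p).take (P.getD j []).length = P.getD j []

/-- Distance from phrase `j` to its rightmost earlier occurrence (its rightmost source). -/
noncomputable def rightmostDist (T : List ℕ) (P : List (List ℕ)) (j : ℕ) : ℕ :=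
  phraseStart P j -
    sSup {p | p < phraseStart P j ∧ (T.drop p).take (P.getD j []).length = P.getD j []}

/- Sources of later copies of a phrase lie at or after the start of every earlier copy, so the
backward jumps of the copies of a fixed phrase are disjoint subintervals of `[0, n]` and their
lengths sum to at most `n`. The logarithmic bound is then Jensen's inequality for the concave
logarithm. -/

open Finset

theorem Finset.sum_tsub_le_sup_of_chain {ι : Type*} [LinearOrder ι] (s : Finset ι)
    (a b : ι → ℕ) (h : ∀ i ∈ s, ∀ j ∈ s, i < j → a i ≤ b j) :
    ∑ j ∈ s, (a j - b j) ≤ s.sup a := by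
  induction s using Finset.induction_on_max with
  | empty => simp
  | insert m s hmax ih =>
    have hm : m ∉ s := fun hm => lt_irrefl m (hmax m hm)
    have hsub : ∀ i ∈ s, ∀ j ∈ s, i < j → a i ≤ b j := fun i hi j hj =>
      h i (mem_insert_of_mem hi) j (mem_insert_of_mem hj)
    have hsup : s.sup a ≤ b m :=
      Finset.sup_le fun i hi => h i (mem_insert_of_mem hi) m (mem_insert_self m s) (hmax i hi)
    have := ih hsub
    rw [sum_insert hm, sup_insert]
    omega

namespace Real

theorem sum_log_le_card_mul_log_div {ι : Type*} {s : Finset ι} {f : ι → ℝ}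
    (hf : ∀ i ∈ s, 0 < f i) {n : ℝ} (hn : ∑ i ∈ s, f i ≤ n) :
    ∑ i ∈ s, log (f i) ≤ #s * log (n / #s) := by
  rcases s.eq_empty_or_nonempty with rfl | hs
  · simp
  have hcard : (0 : ℝ) < #s := by exact_mod_cast hs.card_pos
  have jensen := strictConcaveOn_log_Ioi.concaveOn.le_map_centerMass (t := s) (w := fun _ => 1)
    (p := f) (fun _ _ => zero_le_one) (by simpa using hs) hf
  simp only [centerMass, sum_const, nsmul_eq_mul, mul_one, one_mul, smul_eq_mul,
    Function.comp_def] at jensen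
  calc ∑ i ∈ s, log (f i) = #s * ((#s : ℝ)⁻¹ * ∑ i ∈ s, log (f i)) := by field_simp
    _ ≤ #s * log ((#s : ℝ)⁻¹ * ∑ i ∈ s, f i) := by gcongr
    _ ≤ #s * log (n / #s) := by
      gcongr
      · exact mul_pos (inv_pos.2 hcard) (sum_pos hf hs)
      · rw [inv_mul_eq_div]
        gcongr

theorem sum_logb_le_card_mul_logb_div {ι : Type*} {s : Finset ι} {f : ι → ℝ} {b : ℝ}
    (hb : 1 < b) (hf : ∀ i ∈ s, 0 < f i) {n : ℝ} (hn : ∑ i ∈ s, f i ≤ n) :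
    ∑ i ∈ s, logb b (f i) ≤ #s * logb b (n / #s) := by
  simp only [logb, ← sum_div, mul_div_assoc']
  gcongr
  · exact (log_pos hb).le
  · exact sum_log_le_card_mul_log_div hf hn

end Real

def earlierOccurrences (T : List ℕ) (P : List (List ℕ)) (j : ℕ) : Set ℕ :=
  {p | p < phraseStart P j ∧ (T.drop p).take (P.getD j []).length = P.getD j []}

noncomputable def rightmostSource (T : List ℕ) (P : List (List ℕ)) (j : ℕ) : ℕ :=
  sSup (earlierOccurrences T P j)

section Parsing

variable {T : List ℕ} {P : List (List ℕ)} {i j : ℕ}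

theorem rightmostDist_eq : rightmostDist T P j = phraseStart P j - rightmostSource T P j := rfl

theorem bddAbove_earlierOccurrences : BddAbove (earlierOccurrences T P j) :=
  ⟨phraseStart P j, fun _ hp => hp.1.le⟩

theorem le_rightmostSource {p : ℕ} (hp : p ∈ earlierOccurrences T P j) :
    p ≤ rightmostSource T P j :=
  le_csSup bddAbove_earlierOccurrences hp

theorem rightmostSource_lt_phraseStart (h : hasEarlier T P j) :
    rightmostSource T P j < phraseStart P j :=
  (Nat.sSup_mem h bddAbove_earlierOccurrences).1

theorem rightmostDist_pos (h : hasEarlier T P j) : 0 < rightmostDist T P j := by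
  rw [rightmostDist_eq]
  exact Nat.sub_pos_of_lt (rightmostSource_lt_phraseStart h)

theorem phraseStart_le_length_flatten (P : List (List ℕ)) (j : ℕ) :
    phraseStart P j ≤ P.flatten.length := by
  conv_rhs => rw [← List.take_append_drop j P]
  rw [List.flatten_append, List.length_append]
  exact Nat.le_add_right _ _

theorem phraseStart_succ (hj : j < P.length) :
    phraseStart P (j + 1) = phraseStart P j + (P.getD j []).length := by
  rw [phraseStart, phraseStart, List.take_add, List.flatten_append, List.length_append,
    List.drop_eq_getElem_cons hj, List.getD_eq_getElem _ _ hj, List.take_succ_cons, List.take_zero]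
  simp

theorem phraseStart_mono (P : List (List ℕ)) : Monotone (phraseStart P) := by
  intro a b hab
  obtain ⟨c, rfl⟩ := Nat.exists_eq_add_of_le hab
  simp only [phraseStart, List.take_add, List.flatten_append, List.length_append]
  exact Nat.le_add_right _ _

theorem phraseStart_lt_phraseStart (hi : i < P.length) (hne : P.getD i [] ≠ []) (hij : i < j) :
    phraseStart P i < phraseStart P j :=
  calc phraseStart P i < phraseStart P (i + 1) := by
        rw [phraseStart_succ hi]
        exact Nat.lt_add_of_pos_right (List.length_pos_iff.2 hne)
    _ ≤ phraseStart P j := phraseStart_mono P hij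

theorem take_drop_phraseStart (hj : j < P.length) :
    (P.flatten.drop (phraseStart P j)).take (P.getD j []).length = P.getD j [] := by
  have hsplit : P.flatten = (P.take j).flatten ++ (P.drop j).flatten := by
    rw [← List.flatten_append, List.take_append_drop]
  rw [hsplit, phraseStart, List.drop_left, List.drop_eq_getElem_cons hj, List.flatten_cons,
    List.getD_eq_getElem _ _ hj, List.take_left]

/-- An earlier copy of the same phrase is itself a candidate source. -/
theorem phraseStart_le_rightmostSource (hT : T = P.flatten) (hi : i < P.length)
    (hne : P.getD i [] ≠ []) (hij : i < j) (heq : P.getD i [] = P.getD j []) :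
    phraseStart P i ≤ rightmostSource T P j := by
  refine le_rightmostSource ⟨phraseStart_lt_phraseStart hi hne hij, ?_⟩
  rw [← heq, hT]
  exact take_drop_phraseStart hi

end Parsing

theorem rightmost_distances_sum_general (T : List ℕ) (P : List (List ℕ)) (hP : IsLZLike T P)
    (Q : List ℕ) (I : Finset ℕ)
    (hI : ∀ j, j ∈ I ↔ (j < P.length ∧ P.getD j [] = Q))
    (hsrc : ∀ j ∈ I, hasEarlier T P j) :
    (∑ j ∈ I, (rightmostDist T P j : ℝ)) ≤ (T.length : ℝ) ∧
    ∑ j ∈ I, Real.logb 2 (rightmostDist T P j) ≤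
      (I.card : ℝ) * Real.logb 2 ((T.length : ℝ) / I.card) := by
  obtain ⟨hT, hne, -⟩ := hP
  have hchain : ∀ i ∈ I, ∀ j ∈ I, i < j → phraseStart P i ≤ rightmostSource T P j := by
    intro i hi j hj hij
    obtain ⟨hiP, hiQ⟩ := (hI i).1 hi
    refine phraseStart_le_rightmostSource hT hiP ?_ hij (hiQ.trans ((hI j).1 hj).2.symm)
    exact hne _ (List.getD_eq_getElem _ _ hiP ▸ List.getElem_mem hiP)
  have hsum : ∑ j ∈ I, rightmostDist T P j ≤ T.length := by
    simp only [rightmostDist_eq]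
    exact (I.sum_tsub_le_sup_of_chain _ _ hchain).trans
        (Finset.sup_le fun j _ => hT ▸ phraseStart_le_length_flatten P j)
  have hsum' : ∑ j ∈ I, (rightmostDist T P j : ℝ) ≤ T.length := by exact_mod_cast hsum
  refine ⟨hsum', Real.sum_logb_le_card_mul_logb_div one_lt_two (fun j hj => ?_) hsum'⟩
  exact_mod_cast rightmostDist_pos (hsrc j hj)

theorem rightmost_distances_sum (T : List ℕ) (P : List (List ℕ)) (hP : IsLZLike T P)
    (Q : List ℕ) (hQ : Q ≠ []) (I : Finset ℕ)
    (hI : ∀ j, j ∈ I ↔ (j < P.length ∧ P.getD j [] = Q))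
    (hsrc : ∀ j ∈ I, hasEarlier T P j) :
    (∑ j ∈ I, (rightmostDist T P j : ℝ)) ≤ (T.length : ℝ) ∧
    ∑ j ∈ I, Real.logb 2 (rightmostDist T P j) ≤
      (I.card : ℝ) * Real.logb 2 ((T.length : ℝ) / I.card) :=
  rightmost_distances_sum_general T P hP Q I hI hsrc
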